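/- Let K ≥ 1, costs c₀, c₁, ..., c_K ≥ 0, ramp fractions p₀, ..., p_K ≥ 0 with ∑_k p_k = 1, and α ∈ [0,1]. Define CostGreater(α) := c₀ + (1 − (1−α)·p₀)·∑_{k≥1} c_k and CostLimited(α) := c₀ + α·∑_{k≥1} c_k + (1−α)·∑_{k≥1} p_k·c_k. Then CostLimited(α) ≤ CostGreater(α) for every α ∈ [0,1], with equality when α = 1. -/
import Mathlib

open Finset

/-- For the multi-treatment UniCoRn design with `K` treatments, the limited-mixing cost
`c₀ + α·∑_{k≥1} c_k + (1−α)·∑_{k≥1} p_k·c_k` never exceeds the greater-mixing cost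
`c₀ + (1 − (1−α)·p₀)·∑_{k≥1} c_k`, with equality at `α = 1`. -/
theorem limited_le_greater_mixing_cost (K : ℕ) (hK : 1 ≤ K)
    (c p : Fin (K + 1) → ℝ)
    (hc : ∀ k, 0 ≤ c k) (hp : ∀ k, 0 ≤ p k) (hsum : ∑ k, p k = 1) :
    (∀ α : ℝ, 0 ≤ α → α ≤ 1 →
      c 0 + α * ∑ k ∈ univ \ {0}, c k + (1 - α) * ∑ k ∈ univ \ {0}, p k * c k ≤
        c 0 + (1 - (1 - α) * p 0) * ∑ k ∈ univ \ {0}, c k) ∧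
    (c 0 + 1 * ∑ k ∈ univ \ {0}, c k + (1 - 1) * ∑ k ∈ univ \ {0}, p k * c k =
      c 0 + (1 - (1 - 1) * p 0) * ∑ k ∈ univ \ {0}, c k) := by
  set s : Finset (Fin (K + 1)) := univ \ {0}
  have hps : ∑ k ∈ s, p k = 1 - p 0 := by
    have := Finset.sum_sdiff_eq_sub (f := p) (Finset.subset_univ {0})
    simp [s, this, hsum]
  have hkey : ∑ k ∈ s, p k * c k ≤ (1 - p 0) * ∑ k ∈ s, c k := by
    calc ∑ k ∈ s, p k * c k ≤ ∑ k ∈ s, p k * ∑ j ∈ s, c j := by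
          apply Finset.sum_le_sum
          intro k hk
          exact mul_le_mul_of_nonneg_left
            (Finset.single_le_sum (fun j _ => hc j) hk) (hp k)
      _ = (1 - p 0) * ∑ j ∈ s, c j := by rw [← Finset.sum_mul, hps]
  constructor
  · intro α hα0 hα1
    have h1 : (1 - α) * ∑ k ∈ s, p k * c k ≤ (1 - α) * ((1 - p 0) * ∑ k ∈ s, c k) :=
      mul_le_mul_of_nonneg_left hkey (by linarith)
    nlinarith [h1]
  · ring
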